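/- arXiv:1005.0288 — 7 statements merged into one kernel-verified Lean document; each statement's English description precedes it below -/
import Mathlib

section
/- Let R be a commutative ring, A = R[X_1,…,X_n], and let A ⊇ A_0 ⊇ A_1 ⊇ … be a descending chain of ideals which is a composition-filtration, i.e.: for every n-tuple H' with all components in A_1, every d ≥ 0, and all n-tuples G, G̃ with all components in A_0 satisfying G_i ≡ G̃_i mod A_d for all i, one has H'_j(G) ≡ H'_j(G̃) mod A_{d+1} for all j. Suppose H is an n-tuple with all components in A_1, the identity tuple I = (X_1,…,X_n) has all components in A_0, and F := I − H has a right inverse of the form I + K, i.e. F∘(I + K) = I, where K is an n-tuple with all components in A_0. Define φ(K̃) := H∘(I + K̃) for an n-tuple K̃. Then for every d ≥ 0 and every n-tuple K̃ with all components in A_0: if K̃_i ≡ K_i mod A_d for all i, then φ(K̃)_j ≡ K_j mod A_{d+1} for all j. -/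
/-- Lemma 3.7 of the paper. Let `A_0 ⊇ A_1 ⊇ …` be a descending chain of
ideals of `R[X_1,…,X_n]` which is a composition-filtration. Suppose the components of `H`
lie in `A_1`, the components of the identity tuple lie in `A_0`, and `F := I − H` has a right
inverse `I + K` with the components of `K` in `A_0`. Then for every `d` and every tuple `K̃`
with components in `A_0`: if `K̃ ≡ K mod A_d` componentwise, then
`φ(K̃) := H∘(I + K̃) ≡ K mod A_{d+1}` componentwise. -/
theorem iterate_step_congruence
    (R : Type*) [CommRing R] (n : ℕ)
    (A : ℕ → Ideal (MvPolynomial (Fin n) R))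
    (hdesc : ∀ d, A (d + 1) ≤ A d)
    (hcompfil : ∀ (H' : Fin n → MvPolynomial (Fin n) R), (∀ j, H' j ∈ A 1) →
      ∀ (d : ℕ) (G G' : Fin n → MvPolynomial (Fin n) R),
        (∀ i, G i ∈ A 0) → (∀ i, G' i ∈ A 0) → (∀ i, G i - G' i ∈ A d) →
        ∀ j, MvPolynomial.bind₁ G (H' j) - MvPolynomial.bind₁ G' (H' j) ∈ A (d + 1))
    (H K : Fin n → MvPolynomial (Fin n) R)
    (hH : ∀ j, H j ∈ A 1)
    (hI : ∀ i, (MvPolynomial.X i : MvPolynomial (Fin n) R) ∈ A 0)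
    (hK : ∀ i, K i ∈ A 0)
    (hinv : ∀ i, MvPolynomial.bind₁ (fun j => MvPolynomial.X j + K j)
        (MvPolynomial.X i - H i) = MvPolynomial.X i) :
    ∀ (d : ℕ) (K' : Fin n → MvPolynomial (Fin n) R), (∀ i, K' i ∈ A 0) →
      (∀ i, K' i - K i ∈ A d) →
      ∀ j, MvPolynomial.bind₁ (fun l => MvPolynomial.X l + K' l) (H j) - K j ∈ A (d + 1) := by
  have hKeq : ∀ i, MvPolynomial.bind₁ (fun j => MvPolynomial.X j + K j) (H i) = K i := by
    intro i
    have := hinv i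
    simp only [map_sub, MvPolynomial.bind₁_X_right] at this
    linear_combination -this
  intro d K' hK' hdiff j
  have := hcompfil H hH d (fun l => MvPolynomial.X l + K' l) (fun l => MvPolynomial.X l + K l)
    (fun i => Ideal.add_mem _ (hI i) (hK' i)) (fun i => Ideal.add_mem _ (hI i) (hK i))
    (fun i => by simpa using hdiff i) j
  rw [hKeq j] at this
  exact this
end

section
/- Let R be a commutative ring, A = R[X_1,…,X_n], and let A ⊇ A_0 ⊇ A_1 ⊇ … be a descending chain of ideals which is a composition-filtration. For each d let π_d : A → A/A_d be the quotient map and s_d : A/A_d → A a section (π_d ∘ s_d = id) such that: (i) the sections form a converging system, i.e. for every a ∈ A there exists D ∈ ℕ such that s_d(π_d(a)) = a for all d ≥ D; and (ii) each s_d maps π_d(A_0) into A_0. Suppose H is an n-tuple with all components in A_1, the identity tuple I has all components in A_0, and F := I − H has an inverse I + K with F∘(I+K) = (I+K)∘F = I, where K has all components in A_0. Define the sequence of n-tuples K_0 := 0 and K_{d+1} := s_{d+1}(π_{d+1}(H∘(I + K_d))) applied componentwise. Then the sequence stabilises at K: there exists D ∈ ℕ such that K_d = K for all d ≥ D. -/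
/-- Corollary 3.8 of the paper. Given a composition-filtration
`A_0 ⊇ A_1 ⊇ …` of ideals of `R[X_1,…,X_n]`, quotient maps `π_d` with sections `s_d`
forming a converging system and mapping `π_d(A_0)` into `A_0`, components of `H` in `A_1`,
components of the identity tuple in `A_0`, and an inverse `I + K` of `F = I − H` with
components of `K` in `A_0`, the iteration `K_0 = 0`, `K_{d+1} = s_{d+1}(π_{d+1}(H∘(I+K_d)))`
stabilises at `K`. -/
theorem iteration_stabilises
    (R : Type*) [CommRing R] (n : ℕ)
    (A : ℕ → Ideal (MvPolynomial (Fin n) R))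
    (hdesc : ∀ d, A (d + 1) ≤ A d)
    (hcompfil : ∀ (H' : Fin n → MvPolynomial (Fin n) R), (∀ j, H' j ∈ A 1) →
      ∀ (d : ℕ) (G G' : Fin n → MvPolynomial (Fin n) R),
        (∀ i, G i ∈ A 0) → (∀ i, G' i ∈ A 0) → (∀ i, G i - G' i ∈ A d) →
        ∀ j, MvPolynomial.bind₁ G (H' j) - MvPolynomial.bind₁ G' (H' j) ∈ A (d + 1))
    (s : (d : ℕ) → (MvPolynomial (Fin n) R ⧸ A d) → MvPolynomial (Fin n) R)
    (hsec : ∀ (d : ℕ) (a : MvPolynomial (Fin n) R ⧸ A d), Ideal.Quotient.mk (A d) (s d a) = a)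
    (hconv : ∀ a : MvPolynomial (Fin n) R, ∃ D : ℕ, ∀ d ≥ D,
      s d (Ideal.Quotient.mk (A d) a) = a)
    (hs0 : ∀ (d : ℕ) (a : MvPolynomial (Fin n) R), a ∈ A 0 →
      s d (Ideal.Quotient.mk (A d) a) ∈ A 0)
    (H K : Fin n → MvPolynomial (Fin n) R)
    (hH : ∀ j, H j ∈ A 1)
    (hI : ∀ i, (MvPolynomial.X i : MvPolynomial (Fin n) R) ∈ A 0)
    (hK : ∀ i, K i ∈ A 0)
    (hinv₁ : ∀ i, MvPolynomial.bind₁ (fun j => MvPolynomial.X j + K j)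
        (MvPolynomial.X i - H i) = MvPolynomial.X i)
    (hinv₂ : ∀ i, MvPolynomial.bind₁ (fun j => MvPolynomial.X j - H j)
        (MvPolynomial.X i + K i) = MvPolynomial.X i)
    (Kseq : ℕ → Fin n → MvPolynomial (Fin n) R)
    (hK0 : Kseq 0 = 0)
    (hKrec : ∀ (d : ℕ) (i : Fin n), Kseq (d + 1) i =
      s (d + 1) (Ideal.Quotient.mk (A (d + 1))
        (MvPolynomial.bind₁ (fun j => MvPolynomial.X j + Kseq d j) (H i)))) :
    ∃ D : ℕ, ∀ d ≥ D, Kseq d = K := by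
  classical
  have hKeq : ∀ i, (MvPolynomial.bind₁ (fun j => MvPolynomial.X j + K j)) (H i) = K i := by
    intro i
    have h := hinv₁ i
    rw [map_sub, MvPolynomial.bind₁_X_right] at h
    linear_combination -h
  have P : ∀ d, (∀ i, Kseq d i ∈ A 0) ∧ (∀ i, Kseq d i - K i ∈ A d) := by
    intro d
    induction d with
    | zero =>
      refine ⟨fun i => by simp [hK0], fun i => ?_⟩
      simpa [hK0] using (A 0).neg_mem (hK i)
    | succ d ih =>
      obtain ⟨ih0, ihd⟩ := ih
      have hcong : ∀ i, Ideal.Quotient.mk (A (d+1))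
          (MvPolynomial.bind₁ (fun j => MvPolynomial.X j + Kseq d j) (H i))
          = Ideal.Quotient.mk (A (d+1)) (K i) := by
        intro i
        rw [Ideal.Quotient.eq]
        have hsub : ∀ j, (fun j => MvPolynomial.X j + Kseq d j) j
            - (fun j => MvPolynomial.X j + K j) j ∈ A d := by
          intro j
          have := ihd j
          convert this using 1
          ring
        have := hcompfil H hH d (fun j => MvPolynomial.X j + Kseq d j)
          (fun j => MvPolynomial.X j + K j)
          (fun j => (A 0).add_mem (hI j) (ih0 j))
          (fun j => (A 0).add_mem (hI j) (hK j)) hsub i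
        rwa [hKeq i] at this
      constructor
      · intro i
        rw [hKrec d i, hcong i]
        exact hs0 (d+1) (K i) (hK i)
      · intro i
        rw [hKrec d i, hcong i, ← Ideal.Quotient.eq]
        exact hsec (d+1) _
  have hstep : ∀ d i, Kseq (d+1) i = s (d+1) (Ideal.Quotient.mk (A (d+1)) (K i)) := by
    intro d i
    obtain ⟨ih0, ihd⟩ := P d
    rw [hKrec d i]
    congr 1
    rw [Ideal.Quotient.eq]
    have hsub : ∀ j, (fun j => MvPolynomial.X j + Kseq d j) j
        - (fun j => MvPolynomial.X j + K j) j ∈ A d := by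
      intro j
      have := ihd j
      convert this using 1
      ring
    have := hcompfil H hH d (fun j => MvPolynomial.X j + Kseq d j)
      (fun j => MvPolynomial.X j + K j)
      (fun j => (A 0).add_mem (hI j) (ih0 j))
      (fun j => (A 0).add_mem (hI j) (hK j)) hsub i
    rwa [hKeq i] at this
  choose D hD using fun i => hconv (K i)
  refine ⟨(Finset.univ.sup D) + 1, fun d hd => ?_⟩
  obtain ⟨e, rfl⟩ : ∃ e, d = e + 1 := ⟨d - 1, by omega⟩
  funext i
  rw [hstep e i]
  exact hD i (e+1) (le_trans (Finset.le_sup (Finset.mem_univ i)) (by omega))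
end

section
/- Let R be a commutative ring and F = I − H a polynomial endomorphism of Rⁿ, where every monomial occurring in each component of H has total degree at least 2 (H has affine part zero). Let f = (f_1,…,f_n) be an n-tuple of polynomials in R[t] with f(0) = 0 (each f_i has zero constant term). Then there exists at most one n-tuple g = (g_1,…,g_n) of polynomials in R[t] with g(0) = 0 such that F(g) = f, i.e. such that substituting g_1,…,g_n for X_1,…,X_n in each F_i yields f_i. In other words, if g and g' are two such tuples then g = g'. -/
open Polynomial

/-- If `X^k` divides `p j - q j` for all `j`, then `X^k` divides
`aeval p v - aeval q v` for any multivariate polynomial `v`. -/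
lemma aux_dvd_aeval_sub {R : Type*} [CommRing R] {n : ℕ} (k : ℕ)
    (p q : Fin n → Polynomial R)
    (h : ∀ j, (Polynomial.X : Polynomial R) ^ k ∣ p j - q j)
    (v : MvPolynomial (Fin n) R) :
    (Polynomial.X : Polynomial R) ^ k ∣
      MvPolynomial.aeval p v - MvPolynomial.aeval q v := by
  induction v using MvPolynomial.induction_on with
  | C r => simp
  | add a b ha hb =>
    have heq : MvPolynomial.aeval p (a + b) - MvPolynomial.aeval q (a + b)
        = (MvPolynomial.aeval p a - MvPolynomial.aeval q a)
          + (MvPolynomial.aeval p b - MvPolynomial.aeval q b) := by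
      simp only [map_add]; ring
    rw [heq]; exact dvd_add ha hb
  | mul_X a j ih =>
    have heq : MvPolynomial.aeval p (a * MvPolynomial.X j)
          - MvPolynomial.aeval q (a * MvPolynomial.X j)
        = MvPolynomial.aeval p a * (p j - q j)
          + (MvPolynomial.aeval p a - MvPolynomial.aeval q a) * q j := by
      simp only [map_mul, MvPolynomial.aeval_X]; ring
    rw [heq]
    exact dvd_add ((h j).mul_left _) (ih.mul_right _)

/-- If all `q j` have zero constant term and `v` has zero constant term,
then `aeval q v` is divisible by `X`. -/
lemma aux_X_dvd_aeval {R : Type*} [CommRing R] {n : ℕ}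
    (q : Fin n → Polynomial R) (hq : ∀ j, (q j).coeff 0 = 0)
    (v : MvPolynomial (Fin n) R) (hv : MvPolynomial.constantCoeff v = 0) :
    (Polynomial.X : Polynomial R) ∣ MvPolynomial.aeval q v := by
  rw [Polynomial.X_dvd_iff]
  have hcomp : (Polynomial.constantCoeff.comp
        ((MvPolynomial.aeval q : MvPolynomial (Fin n) R →ₐ[R] Polynomial R) :
          MvPolynomial (Fin n) R →+* Polynomial R))
      = (MvPolynomial.eval (fun _ => (0 : R)) : MvPolynomial (Fin n) R →+* R) := by
    apply MvPolynomial.ringHom_ext <;> intro j <;>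
      simp [Polynomial.constantCoeff_apply, hq]
  have h := RingHom.congr_fun hcomp v
  simp only [RingHom.coe_comp, Function.comp_apply, RingHom.coe_coe,
    Polynomial.constantCoeff_apply] at h
  rw [h]
  simpa [MvPolynomial.constantCoeff_eq] using hv

/-- Remark 4.1 of the paper. Let `F = I − H` where every monomial of each
component of `H` has total degree at least 2. For any tuple `f` of polynomials in `R[t]`
with `f(0) = 0`, there is at most one tuple `g` of polynomials in `R[t]` with `g(0) = 0`
such that `F(g) = f`. -/
theorem preimage_curve_unique
    (R : Type*) [CommRing R] (n : ℕ)
    (H : Fin n → MvPolynomial (Fin n) R)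
    (hH : ∀ i, ∀ m ∈ (H i).support, 2 ≤ m.sum fun _ k => k)
    (f : Fin n → Polynomial R) (hf : ∀ i, (f i).coeff 0 = 0)
    (g g' : Fin n → Polynomial R)
    (hg0 : ∀ i, (g i).coeff 0 = 0) (hg'0 : ∀ i, (g' i).coeff 0 = 0)
    (hg : ∀ i, MvPolynomial.aeval g (MvPolynomial.X i - H i) = f i)
    (hg' : ∀ i, MvPolynomial.aeval g' (MvPolynomial.X i - H i) = f i) :
    g = g' := by
  have key : ∀ k, ∀ i, (Polynomial.X : Polynomial R) ^ k ∣ g i - g' i := by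
    intro k
    induction k with
    | zero => intro i; simp
    | succ k ih =>
      intro i
      have hdiff : g i - g' i
          = MvPolynomial.aeval g (H i) - MvPolynomial.aeval g' (H i) := by
        have h1 := hg i
        have h2 := hg' i
        simp only [map_sub, MvPolynomial.aeval_X] at h1 h2
        have h3 : g i - MvPolynomial.aeval g (H i)
            = g' i - MvPolynomial.aeval g' (H i) := by rw [h1, h2]
        linear_combination h3
      rw [hdiff, MvPolynomial.as_sum (H i), map_sum, map_sum, ← Finset.sum_sub_distrib]
      apply Finset.dvd_sum
      intro m hm
      -- `m` has total degree ≥ 2, so some variable `j0` occurs in `m`.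
      have hdeg := hH i m hm
      have hmne : m ≠ 0 := by
        intro h0; rw [h0] at hdeg; simp at hdeg
      obtain ⟨j0, hj0⟩ := Finsupp.ne_iff.mp hmne
      simp only [Finsupp.coe_zero, Pi.zero_apply] at hj0
      set c := MvPolynomial.coeff m (H i) with hc
      set m' : Fin n →₀ ℕ := m - Finsupp.single j0 1 with hm'
      have hmdecomp : m = Finsupp.single j0 1 + m' := by
        rw [hm']
        ext a
        by_cases ha : a = j0
        · subst ha
          simp [Finsupp.single_apply]
          omega
        · simp [Finsupp.single_apply, Ne.symm ha]
      have hm'ne : m' ≠ 0 := by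
        intro h0
        rw [hmdecomp, h0, add_zero] at hdeg
        rw [Finsupp.sum_single_index] at hdeg <;> omega
      have hmon : MvPolynomial.monomial m c
          = MvPolynomial.X j0 * MvPolynomial.monomial m' c := by
        rw [hmdecomp, MvPolynomial.X, MvPolynomial.monomial_mul, one_mul]
      rw [hmon, map_mul, map_mul, MvPolynomial.aeval_X, MvPolynomial.aeval_X]
      have heq : g j0 * MvPolynomial.aeval g (MvPolynomial.monomial m' c)
            - g' j0 * MvPolynomial.aeval g' (MvPolynomial.monomial m' c)
          = g j0 * (MvPolynomial.aeval g (MvPolynomial.monomial m' c)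
              - MvPolynomial.aeval g' (MvPolynomial.monomial m' c))
            + (g j0 - g' j0) * MvPolynomial.aeval g' (MvPolynomial.monomial m' c) := by
        ring
      rw [heq]
      apply dvd_add
      · rw [pow_succ']
        exact mul_dvd_mul
          (by rw [Polynomial.X_dvd_iff]; exact hg0 j0)
          (aux_dvd_aeval_sub k g g' ih _)
      · rw [pow_succ]
        exact mul_dvd_mul (ih j0)
          (aux_X_dvd_aeval g' hg'0 _
            (by rw [MvPolynomial.constantCoeff_monomial, if_neg hm'ne]))
  funext i
  have h0 : g i - g' i = 0 := by
    ext j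
    have hcj := (Polynomial.X_pow_dvd_iff.mp (key (j + 1) i)) j (lt_add_one j)
    simpa using hcj
  exact sub_eq_zero.mp h0
end

section
/- Let R be a commutative ring and F = I − H a polynomial endomorphism of Rⁿ, where every monomial occurring in each component of H has total degree at least 2 (H has affine part zero). Then for every n-tuple f = (f_1,…,f_n) of formal power series in R[[t]] with zero constant terms, there exists a unique n-tuple g = (g_1,…,g_n) of formal power series in R[[t]] with zero constant terms such that substituting g_1,…,g_n for X_1,…,X_n in each F_i yields f_i. -/
open MvPolynomial

section Aux

variable {R : Type*} [CommRing R] {n : ℕ}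

/-- If the substituted tuples agree modulo `X^k`, so do the evaluations. -/
lemma aux_aeval_sub_dvd {k : ℕ} (g g' : Fin n → PowerSeries R)
    (h : ∀ i, (PowerSeries.X : PowerSeries R) ^ k ∣ g i - g' i)
    (Q : MvPolynomial (Fin n) R) :
    (PowerSeries.X : PowerSeries R) ^ k ∣ aeval g Q - aeval g' Q := by
  induction Q using MvPolynomial.induction_on with
  | C a => simp
  | add p q hp hq =>
    have := dvd_add hp hq
    simpa [map_add, sub_add_sub_comm] using this
  | mul_X p i hp =>
    simp only [map_mul, aeval_X]
    have key : aeval g p * g i - aeval g' p * g' i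
        = (aeval g p - aeval g' p) * g i + aeval g' p * (g i - g' i) := by ring
    rw [key]
    exact dvd_add (hp.mul_right _) ((h i).mul_left _)

lemma aux_exists_pair (m : Fin n →₀ ℕ) (hm : 2 ≤ m.sum fun _ e => e) :
    ∃ i j, Finsupp.single i 1 + Finsupp.single j 1 ≤ m := by
  have hsum : (m.sum fun _ e => e) = ∑ a ∈ m.support, m a := rfl
  obtain ⟨i, hi⟩ : m.support.Nonempty := by
    rw [Finset.nonempty_iff_ne_empty]
    intro h
    rw [hsum, h] at hm
    simp at hm
  have him : 1 ≤ m i := Nat.one_le_iff_ne_zero.2 (Finsupp.mem_support_iff.mp hi)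
  by_cases h2 : 2 ≤ m i
  · refine ⟨i, i, ?_⟩
    rw [← Finsupp.single_add, Finsupp.le_def]
    intro a
    rcases eq_or_ne i a with rfl | ha
    · simpa using h2
    · simp [Finsupp.single_eq_of_ne' ha]
  · have h1 : m i = 1 := by omega
    have hsum2 : (m.sum fun _ e => e) = m i + ∑ a ∈ m.support.erase i, m a := by
      rw [hsum, Finset.add_sum_erase _ _ hi]
    obtain ⟨j, hj, hj1⟩ : ∃ j ∈ m.support.erase i, 1 ≤ m j := by
      by_contra hc
      push_neg at hc
      have : ∑ a ∈ m.support.erase i, m a = 0 :=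
        Finset.sum_eq_zero fun a ha => by have := hc a ha; omega
      omega
    have hji : j ≠ i := (Finset.mem_erase.mp hj).1
    refine ⟨i, j, ?_⟩
    rw [Finsupp.le_def]
    intro a
    rcases eq_or_ne i a with rfl | hia
    · simp [Finsupp.single_eq_of_ne' hji, h1]
    · rcases eq_or_ne j a with rfl | hja
      · simpa [Finsupp.single_eq_of_ne' hia] using hj1
      · simp [Finsupp.single_eq_of_ne' hia, Finsupp.single_eq_of_ne' hja]

/-- Key lemma: if all monomials of `P` have total degree at least 2 and the tuples
`g`, `g'` have zero constant terms and agree modulo `X^k`, then the evaluations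
agree modulo `X^(k+1)`. -/
lemma aux_key {k : ℕ} (P : MvPolynomial (Fin n) R)
    (hP : ∀ m ∈ P.support, 2 ≤ m.sum fun _ e => e)
    (g g' : Fin n → PowerSeries R)
    (hg : ∀ i, PowerSeries.constantCoeff (g i) = 0)
    (hg' : ∀ i, PowerSeries.constantCoeff (g' i) = 0)
    (h : ∀ i, (PowerSeries.X : PowerSeries R) ^ k ∣ g i - g' i) :
    (PowerSeries.X : PowerSeries R) ^ (k + 1) ∣ aeval g P - aeval g' P := by
  have hXg : ∀ i, (PowerSeries.X : PowerSeries R) ∣ g i :=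
    fun i => PowerSeries.X_dvd_iff.2 (hg i)
  have hXg' : ∀ i, (PowerSeries.X : PowerSeries R) ∣ g' i :=
    fun i => PowerSeries.X_dvd_iff.2 (hg' i)
  rw [show aeval g P - aeval g' P
      = ∑ m ∈ P.support, (aeval g (monomial m (coeff m P))
        - aeval g' (monomial m (coeff m P))) from by
    rw [Finset.sum_sub_distrib, ← map_sum, ← map_sum, ← P.as_sum]]
  refine Finset.dvd_sum fun m hm => ?_
  obtain ⟨i, j, hij⟩ := aux_exists_pair m (hP m hm)
  have hXi : (X i : MvPolynomial (Fin n) R) = monomial (Finsupp.single i 1) 1 := rfl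
  have hXj : (X j : MvPolynomial (Fin n) R) = monomial (Finsupp.single j 1) 1 := rfl
  have hmono : (monomial m (coeff m P) : MvPolynomial (Fin n) R)
      = X i * X j * monomial (m - (Finsupp.single i 1 + Finsupp.single j 1)) (coeff m P) := by
    rw [hXi, hXj, monomial_mul, monomial_mul, one_mul, one_mul, add_tsub_cancel_of_le hij]
  rw [hmono]
  simp only [map_mul, aeval_X]
  set A := aeval g (monomial (m - (Finsupp.single i 1 + Finsupp.single j 1)) (coeff m P))
  set B := aeval g' (monomial (m - (Finsupp.single i 1 + Finsupp.single j 1)) (coeff m P))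
  have hid : g i * g j * A - g' i * g' j * B
      = (g i - g' i) * (g j * A) + g' i * ((g j - g' j) * A) + (g' i * g' j) * (A - B) := by
    ring
  rw [hid]
  have hAB : (PowerSeries.X : PowerSeries R) ^ k ∣ A - B :=
    aux_aeval_sub_dvd g g' h _
  refine dvd_add (dvd_add ?_ ?_) ?_
  · rw [pow_succ]
    exact mul_dvd_mul (h i) ((hXg j).mul_right A)
  · rw [pow_succ']
    exact mul_dvd_mul (hXg' i) ((h j).mul_right A)
  · rw [pow_succ']
    exact mul_dvd_mul ((hXg' i).mul_right _) hAB

/-- The coefficients of the solution, defined by strong recursion. -/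
noncomputable def auxCoeff (H : Fin n → MvPolynomial (Fin n) R)
    (f : Fin n → PowerSeries R) : ℕ → Fin n → R
  | 0 => fun _ => 0
  | (k + 1) => fun i =>
      PowerSeries.coeff (k + 1) (f i) +
      PowerSeries.coeff (k + 1) (aeval
        (fun j => PowerSeries.mk fun m =>
          if _h : m ≤ k then auxCoeff H f m j else 0) (H i))
  decreasing_by exact Nat.lt_succ_of_le _h

end Aux

/-- Let `F = I − H` where every monomial of each component of `H` has total
degree at least 2. For every tuple `f` of formal power series in `R[[t]]` with zero constant
terms there is a unique tuple `g` of formal power series with zero constant terms such that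
substituting `g` into each `F_i` yields `f_i`. -/
theorem powerSeries_preimage_curve_existsUnique
    (R : Type*) [CommRing R] (n : ℕ)
    (H : Fin n → MvPolynomial (Fin n) R)
    (hH : ∀ i, ∀ m ∈ (H i).support, 2 ≤ m.sum fun _ k => k)
    (f : Fin n → PowerSeries R)
    (hf : ∀ i, PowerSeries.constantCoeff (f i) = 0) :
    ∃! g : Fin n → PowerSeries R,
      (∀ i, PowerSeries.constantCoeff (g i) = 0) ∧
      (∀ i, MvPolynomial.aeval g (MvPolynomial.X i - H i) = f i) := by
  classical
  set g : Fin n → PowerSeries R := fun i => PowerSeries.mk fun k => auxCoeff H f k i with hgdef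
  have hg0 : ∀ i, PowerSeries.constantCoeff (g i) = 0 := by
    intro i
    simp [hgdef, ← PowerSeries.coeff_zero_eq_constantCoeff_apply, auxCoeff]
  -- constant coefficient of H evaluated at any zero-constant tuple is zero
  have hHconst : ∀ i, MvPolynomial.constantCoeff (H i) = 0 := by
    intro i
    rw [MvPolynomial.constantCoeff_eq]
    by_contra hc
    have h0 : (0 : Fin n →₀ ℕ) ∈ (H i).support := MvPolynomial.mem_support_iff.2 hc
    have := hH i 0 h0
    simp at this
  have hconst_aeval : ∀ (y : Fin n → PowerSeries R),
      (∀ i, PowerSeries.constantCoeff (y i) = 0) →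
      ∀ i, PowerSeries.constantCoeff (MvPolynomial.aeval y (H i)) = 0 := by
    intro y hy i
    have hdvd : (PowerSeries.X : PowerSeries R) ^ (0 + 1) ∣
        MvPolynomial.aeval y (H i) - MvPolynomial.aeval (fun _ => (0 : PowerSeries R)) (H i) :=
      aux_key (H i) (hH i) y _ hy (fun _ => map_zero _)
        (fun _ => by rw [pow_zero]; exact one_dvd _)
    rw [MvPolynomial.aeval_zero', hHconst i, map_zero, sub_zero] at hdvd
    rw [← PowerSeries.coeff_zero_eq_constantCoeff_apply]
    exact PowerSeries.X_pow_dvd_iff.1 hdvd 0 (by omega)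
  -- the fixed point property: g i = f i + aeval g (H i)
  have hfix : ∀ i, g i = f i + MvPolynomial.aeval g (H i) := by
    intro i
    ext k
    cases k with
    | zero =>
      simp only [map_add, PowerSeries.coeff_zero_eq_constantCoeff_apply]
      rw [hg0 i, hf i, hconst_aeval g hg0 i, add_zero]
    | succ k =>
      -- the truncation of g below k+1
      set gtr : Fin n → PowerSeries R := fun j => PowerSeries.mk fun m =>
        if _h : m ≤ k then auxCoeff H f m j else 0 with hgtr
      have hgtr0 : ∀ j, PowerSeries.constantCoeff (gtr j) = 0 := by
        intro j
        simp [hgtr, ← PowerSeries.coeff_zero_eq_constantCoeff_apply, auxCoeff]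
      have hagree : ∀ j, (PowerSeries.X : PowerSeries R) ^ (k + 1) ∣ g j - gtr j := by
        intro j
        rw [PowerSeries.X_pow_dvd_iff]
        intro m hm
        simp [hgdef, hgtr, Nat.lt_succ_iff.mp hm]
      have hdvd := aux_key (H i) (hH i) g gtr hg0 hgtr0 hagree
      have hcoeff : PowerSeries.coeff (k + 1) (MvPolynomial.aeval g (H i))
          = PowerSeries.coeff (k + 1) (MvPolynomial.aeval gtr (H i)) := by
        have := PowerSeries.X_pow_dvd_iff.1 hdvd (k + 1) (by omega)
        rw [map_sub, sub_eq_zero] at this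
        exact this
      have hrec : auxCoeff H f (k + 1) i =
          PowerSeries.coeff (k + 1) (f i) +
          PowerSeries.coeff (k + 1) (MvPolynomial.aeval (fun j => PowerSeries.mk fun m =>
            if _h : m ≤ k then auxCoeff H f m j else 0) (H i)) := by
        rw [auxCoeff]
      rw [map_add, hcoeff, hgtr, hgdef]
      exact (PowerSeries.coeff_mk _ _).trans hrec
  -- hence g is a solution
  have hsol : ∀ i, MvPolynomial.aeval g (MvPolynomial.X i - H i) = f i := by
    intro i
    rw [map_sub, MvPolynomial.aeval_X, hfix i]
    ring
  refine ⟨g, ⟨hg0, hsol⟩, ?_⟩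
  -- uniqueness
  rintro y ⟨hy0, hysol⟩
  have hyfix : ∀ i, y i = f i + MvPolynomial.aeval y (H i) := by
    intro i
    have := hysol i
    rw [map_sub, MvPolynomial.aeval_X, sub_eq_iff_eq_add] at this
    exact this
  have hall : ∀ k, ∀ i, PowerSeries.coeff k (y i) = PowerSeries.coeff k (g i) := by
    intro k
    induction k using Nat.strong_induction_on with
    | _ k ih =>
      intro i
      have hagree : ∀ j, (PowerSeries.X : PowerSeries R) ^ k ∣ y j - g j := fun j =>
        PowerSeries.X_pow_dvd_iff.2 fun m hm => by rw [map_sub, ih m hm j, sub_self]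
      have hdvd := aux_key (H i) (hH i) y g hy0 hg0 hagree
      have hc := PowerSeries.X_pow_dvd_iff.1 hdvd k (by omega)
      rw [map_sub, sub_eq_zero] at hc
      rw [hyfix i, hfix i, map_add, map_add, hc]
  funext i
  ext k
  exact hall k i
end

section
/- Let R be a commutative ring and H an n-tuple of polynomials in R[X_1,…,X_n] such that every monomial occurring in each component of H has total degree at least 2 (H has affine part zero). Let d ≥ 1 and let p = (p_1,…,p_n), q = (q_1,…,q_n) be n-tuples of polynomials in R[t] with p(0) = q(0) = 0 (zero constant terms) and p_i ≡ q_i mod t^d for all i. Then for every j, H_j(p_1,…,p_n) ≡ H_j(q_1,…,q_n) mod t^{d+1} in R[t]. -/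
open Polynomial

private lemma pow_sub_pow_dvd' {S : Type*} [CommRing S] {x a b : S} {d : ℕ} (hd : 1 ≤ d)
    (ha : x ∣ a) (hb : x ∣ b) (hab : x ^ d ∣ a - b) :
    ∀ k : ℕ, x ^ (d + k - 1) ∣ a ^ k - b ^ k := by
  intro k
  induction k with
  | zero => simp
  | succ k ih =>
    have hk : a ^ (k + 1) - b ^ (k + 1) = (a ^ k - b ^ k) * a + (a - b) * b ^ k := by ring
    rw [hk]
    apply dvd_add
    · have h1 := mul_dvd_mul ih ha
      refine dvd_trans (pow_dvd_pow x (show d + (k + 1) - 1 ≤ (d + k - 1) + 1 by omega)) ?_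
      rwa [pow_succ]
    · have h2 := mul_dvd_mul hab (pow_dvd_pow_of_dvd hb k)
      rw [← pow_add] at h2
      exact dvd_trans (pow_dvd_pow x (by omega)) h2

private lemma prod_sub_prod_dvd' {S ι : Type*} [CommRing S] [DecidableEq ι] {x : S}
    {a b : ι → S} {m : ι → ℕ} {d : ℕ} (hd : 1 ≤ d)
    (ha : ∀ i, x ∣ a i) (hb : ∀ i, x ∣ b i) (hab : ∀ i, x ^ d ∣ a i - b i)
    (s : Finset ι) :
    x ^ (d + (∑ i ∈ s, m i) - 1) ∣ (∏ i ∈ s, a i ^ m i) - (∏ i ∈ s, b i ^ m i) := by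
  induction s using Finset.induction with
  | empty => simp
  | @insert i s hi ih =>
    rw [Finset.prod_insert hi, Finset.prod_insert hi, Finset.sum_insert hi]
    have key : a i ^ m i * ∏ j ∈ s, a j ^ m j - b i ^ m i * ∏ j ∈ s, b j ^ m j
        = (a i ^ m i - b i ^ m i) * ∏ j ∈ s, a j ^ m j
          + b i ^ m i * ((∏ j ∈ s, a j ^ m j) - ∏ j ∈ s, b j ^ m j) := by ring
    rw [key]
    apply dvd_add
    · have h1 := pow_sub_pow_dvd' hd (ha i) (hb i) (hab i) (m i)
      have h2 : x ^ (∑ j ∈ s, m j) ∣ ∏ j ∈ s, a j ^ m j := by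
        rw [← Finset.prod_pow_eq_pow_sum]
        exact Finset.prod_dvd_prod_of_dvd _ _ fun j _ => pow_dvd_pow_of_dvd (ha j) _
      have h3 := mul_dvd_mul h1 h2
      rw [← pow_add] at h3
      exact dvd_trans (pow_dvd_pow x (by omega)) h3
    · have h2 := mul_dvd_mul (pow_dvd_pow_of_dvd (hb i) (m i)) ih
      rw [← pow_add] at h2
      exact dvd_trans (pow_dvd_pow x (by omega)) h2

/-- If every monomial of each component of `H` has total degree at least 2,
`d ≥ 1`, and `p`, `q` are tuples of polynomials in `R[t]` with zero constant terms satisfying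
`p_i ≡ q_i mod t^d` for all `i`, then `H_j(p) ≡ H_j(q) mod t^{d+1}` for all `j`. -/
theorem subst_congruence_mod_t_pow
    (R : Type*) [CommRing R] (n : ℕ)
    (H : Fin n → MvPolynomial (Fin n) R)
    (hH : ∀ j, ∀ m ∈ (H j).support, 2 ≤ m.sum fun _ k => k)
    (d : ℕ) (hd : 1 ≤ d)
    (p q : Fin n → Polynomial R)
    (hp0 : ∀ i, (p i).coeff 0 = 0) (hq0 : ∀ i, (q i).coeff 0 = 0)
    (hpq : ∀ i, (Polynomial.X : Polynomial R) ^ d ∣ p i - q i) :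
    ∀ j, (Polynomial.X : Polynomial R) ^ (d + 1) ∣
      MvPolynomial.aeval p (H j) - MvPolynomial.aeval q (H j) := by
  intro j
  rw [(H j).as_sum, map_sum, map_sum, ← Finset.sum_sub_distrib]
  apply Finset.dvd_sum
  intro m hm
  rw [MvPolynomial.aeval_monomial, MvPolynomial.aeval_monomial, ← mul_sub]
  apply Dvd.dvd.mul_left
  have hprod : ∀ f : Fin n → Polynomial R,
      (m.prod fun i k => f i ^ k) = ∏ i, f i ^ m i :=
    fun f => Finsupp.prod_fintype _ _ (fun i => pow_zero _)
  rw [hprod, hprod]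
  have hsum : (m.sum fun _ k => k) = ∑ i, m i :=
    Finsupp.sum_fintype _ _ (fun i => rfl)
  have h2 : 2 ≤ ∑ i, m i := hsum ▸ hH j m hm
  have h := prod_sub_prod_dvd' (x := (X : Polynomial R)) (m := fun i => m i) hd
    (fun i => X_dvd_iff.mpr (hp0 i)) (fun i => X_dvd_iff.mpr (hq0 i)) hpq Finset.univ
  exact dvd_trans (pow_dvd_pow _ (by omega)) h
end

section
/- Let R be a commutative ring and F = I − H a polynomial endomorphism of Rⁿ, where every monomial occurring in each component of H has total degree at least 2 (H has affine part zero). Let f, g be n-tuples of polynomials in R[t] with f(0) = g(0) = 0 and F(g) = f (substituting g into each F_i yields f_i). Let K : ℕ → (R[t])ⁿ be any sequence of n-tuples of polynomials such that K_1 = 0 and for all d ≥ 1 and all i, (K_{d+1})_i ≡ H_i(f + K_d) mod t^{d+1}, where H_i(f + K_d) denotes the substitution of the tuple f + K_d into H_i. Then for all d ≥ 1 and all i, (K_d)_i ≡ g_i − f_i mod t^d. -/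
open Polynomial

private lemma prod_sub_prod_dvd'_s9 {R : Type*} [CommRing R] {ι : Type*} (s : Finset ι)
    (t : R) (a b : ι → R) (h : ∀ j ∈ s, t ∣ a j - b j) :
    t ∣ (∏ j ∈ s, a j) - (∏ j ∈ s, b j) := by
  classical
  induction s using Finset.induction_on with
  | empty => simp
  | @insert x s hx ih =>
    rw [Finset.prod_insert hx, Finset.prod_insert hx]
    have : a x * ∏ j ∈ s, a j - b x * ∏ j ∈ s, b j
        = a x * ((∏ j ∈ s, a j) - ∏ j ∈ s, b j) + (a x - b x) * ∏ j ∈ s, b j := by ring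
    rw [this]
    exact dvd_add (Dvd.dvd.mul_left (ih fun j hj => h j (Finset.mem_insert_of_mem hj)) _)
      (Dvd.dvd.mul_right (h x (Finset.mem_insert_self x s)) _)

private lemma finsupp_prod_sub_dvd {R : Type*} [CommRing R] {n : ℕ} (t : R)
    (u v : Fin n → R) (h : ∀ j, t ∣ u j - v j) (m : Fin n →₀ ℕ) :
    t ∣ (m.prod fun j k => u j ^ k) - (m.prod fun j k => v j ^ k) := by
  rw [Finsupp.prod, Finsupp.prod]
  exact prod_sub_prod_dvd'_s9 _ t _ _ fun j _ => (h j).trans (sub_dvd_pow_sub_pow _ _ _)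

private lemma dvd_finsupp_prod {R : Type*} [CommRing R] {n : ℕ} (t : R)
    (v : Fin n → R) (hv : ∀ j, t ∣ v j) (m : Fin n →₀ ℕ)
    (hm : 1 ≤ m.sum fun _ k => k) :
    t ∣ m.prod fun j k => v j ^ k := by
  obtain ⟨j, hj⟩ : ∃ j, m j ≠ 0 := by
    by_contra hc
    push_neg at hc
    have : m = 0 := Finsupp.ext hc
    simp [this] at hm
  refine ((hv j).trans (dvd_pow_self _ hj)).trans ?_
  rw [Finsupp.prod]
  exact Finset.dvd_prod_of_mem _ (Finsupp.mem_support_iff.mpr hj)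

private lemma key_prod_dvd {R : Type*} [CommRing R] {n d : ℕ}
    (u v : Fin n → Polynomial R)
    (hu : ∀ j, (X : Polynomial R) ∣ u j) (hv : ∀ j, (X : Polynomial R) ∣ v j)
    (huv : ∀ j, (X : Polynomial R) ^ d ∣ u j - v j)
    (m : Fin n →₀ ℕ) (hm : 2 ≤ m.sum fun _ k => k) :
    (X : Polynomial R) ^ (d + 1) ∣
      (m.prod fun j k => u j ^ k) - (m.prod fun j k => v j ^ k) := by
  obtain ⟨j, hj⟩ : ∃ j, m j ≠ 0 := by
    by_contra hc
    push_neg at hc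
    have : m = 0 := Finsupp.ext hc
    simp [this] at hm
  set m' : Fin n →₀ ℕ := m - Finsupp.single j 1 with hm'
  have hle : Finsupp.single j 1 ≤ m := by
    rw [Finsupp.single_le_iff]
    omega
  have hmeq : m = m' + Finsupp.single j 1 := (tsub_add_cancel_of_le hle).symm
  have hsum : 1 ≤ m'.sum fun _ k => k := by
    have : (m.sum fun _ k => k) = (m'.sum fun _ k => k) + 1 := by
      rw [hmeq, Finsupp.sum_add_index (by simp) (by simp)]
      simp
    omega
  have hsplit : ∀ w : Fin n → Polynomial R,
      (m.prod fun j k => w j ^ k) = (m'.prod fun j k => w j ^ k) * w j := by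
    intro w
    rw [hmeq, Finsupp.prod_add_index' (by simp) (fun a b c => pow_add _ _ _),
      Finsupp.prod_single_index (by simp)]
    simp
  rw [hsplit u, hsplit v]
  have : (m'.prod fun j k => u j ^ k) * u j - (m'.prod fun j k => v j ^ k) * v j
      = ((m'.prod fun j k => u j ^ k) - (m'.prod fun j k => v j ^ k)) * u j
        + (m'.prod fun j k => v j ^ k) * (u j - v j) := by ring
  rw [this, pow_succ]
  refine dvd_add (mul_dvd_mul ?_ (hu j)) ?_
  · exact finsupp_prod_sub_dvd _ _ _ huv m'
  · rw [mul_comm ((X : Polynomial R) ^ d) X]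
    exact mul_dvd_mul (dvd_finsupp_prod _ _ hv m' hsum) (huv j)

private lemma aeval_sub_dvd {R : Type*} [CommRing R] {n d : ℕ}
    (u v : Fin n → Polynomial R)
    (hu : ∀ j, (X : Polynomial R) ∣ u j) (hv : ∀ j, (X : Polynomial R) ∣ v j)
    (huv : ∀ j, (X : Polynomial R) ^ d ∣ u j - v j)
    (p : MvPolynomial (Fin n) R) (hp : ∀ m ∈ p.support, 2 ≤ m.sum fun _ k => k) :
    (X : Polynomial R) ^ (d + 1) ∣ MvPolynomial.aeval u p - MvPolynomial.aeval v p := by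
  conv_rhs => rw [p.as_sum]
  rw [map_sum, map_sum, ← Finset.sum_sub_distrib]
  apply Finset.dvd_sum
  intro m hm
  rw [MvPolynomial.aeval_monomial, MvPolynomial.aeval_monomial, ← mul_sub]
  exact Dvd.dvd.mul_left (key_prod_dvd u v hu hv huv m (hp m hm)) _

/-- key claim in Proposition 4.2 of the paper. Let `F = I − H` with `H` of
affine part zero, and `f`, `g` curves with `f(0) = g(0) = 0` and `F(g) = f`. If `K_1 = 0` and
`K_{d+1} ≡ H(f + K_d) mod t^{d+1}` componentwise, then `K_d ≡ g − f mod t^d` componentwise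
for all `d ≥ 1`. -/
theorem iterative_preimage_congruence
    (R : Type*) [CommRing R] (n : ℕ)
    (H : Fin n → MvPolynomial (Fin n) R)
    (hH : ∀ i, ∀ m ∈ (H i).support, 2 ≤ m.sum fun _ k => k)
    (f g : Fin n → Polynomial R)
    (hf0 : ∀ i, (f i).coeff 0 = 0) (hg0 : ∀ i, (g i).coeff 0 = 0)
    (hFg : ∀ i, MvPolynomial.aeval g (MvPolynomial.X i - H i) = f i)
    (K : ℕ → Fin n → Polynomial R)
    (hK1 : K 1 = 0)
    (hKrec : ∀ d ≥ 1, ∀ i, (Polynomial.X : Polynomial R) ^ (d + 1) ∣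
      K (d + 1) i - MvPolynomial.aeval (fun j => f j + K d j) (H i)) :
    ∀ d ≥ 1, ∀ i, (Polynomial.X : Polynomial R) ^ d ∣ K d i - (g i - f i) := by
  have hXf : ∀ j, (X : Polynomial R) ∣ f j := fun j => X_dvd_iff.mpr (hf0 j)
  have hXg : ∀ j, (X : Polynomial R) ∣ g j := fun j => X_dvd_iff.mpr (hg0 j)
  have hHg : ∀ i, MvPolynomial.aeval g (H i) = g i - f i := by
    intro i
    have := hFg i
    rw [map_sub, MvPolynomial.aeval_X] at this
    linear_combination -this
  intro d
  induction d with
  | zero => omega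
  | succ d ih =>
    intro _ i
    rcases Nat.eq_or_lt_of_le (Nat.one_le_iff_ne_zero.mpr (Nat.succ_ne_zero d)) with h1 | h1
    · -- d + 1 = 1
      have hd0 : d = 0 := by omega
      subst hd0
      rw [hK1]
      simpa [pow_one] using (dvd_sub (hXg i) (hXf i)).neg_right
    · have hd1 : 1 ≤ d := by omega
      have ihd := ih hd1
      have hXK : ∀ j, (X : Polynomial R) ∣ K d j := by
        intro j
        have h1 : (X : Polynomial R) ∣ K d j - (g j - f j) :=
          dvd_trans (dvd_pow_self _ (by omega)) (ihd j)
        have h2 : (X : Polynomial R) ∣ g j - f j := dvd_sub (hXg j) (hXf j)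
        simpa using dvd_add h1 h2
      have hmain : (X : Polynomial R) ^ (d + 1) ∣
          MvPolynomial.aeval (fun j => f j + K d j) (H i) - MvPolynomial.aeval g (H i) := by
        apply aeval_sub_dvd _ _ (fun j => dvd_add (hXf j) (hXK j)) hXg _ _ (hH i)
        intro j
        have := ihd j
        have heq : f j + K d j - g j = K d j - (g j - f j) := by ring
        rw [heq]
        exact this
      have hrec := hKrec d hd1 i
      have : K (d + 1) i - (g i - f i)
          = (K (d + 1) i - MvPolynomial.aeval (fun j => f j + K d j) (H i))
            + (MvPolynomial.aeval (fun j => f j + K d j) (H i) - MvPolynomial.aeval g (H i)) := by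
        rw [hHg i]; ring
      rw [this]
      exact dvd_add hrec hmain
end

section
/- Let R be a commutative ring and F = I − H a polynomial endomorphism of Rⁿ, where every monomial occurring in each component of H has total degree at least 2 (H has affine part zero). Let f, g be n-tuples of polynomials in R[t] with f(0) = g(0) = 0 and F(g) = f. Define the sequence K_1 := 0 and, for d ≥ 1, let (K_{d+1})_i be the truncation of H_i(f + K_d) modulo t^{d+1}, i.e. the unique polynomial of degree at most d congruent to H_i(f + K_d) mod t^{d+1}. Then for every d ≥ 1, (K_d)_i equals the truncation of g_i − f_i modulo t^d; in particular, there exists D ∈ ℕ such that K_d = g − f (and hence f + K_d = g) for all d ≥ D. -/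
open Polynomial

lemma aux_multiset_dvd {A ι : Type*} [CommRing A] (a b : ι → A) (u v : A)
    (hd : ∀ j, u ∣ a j - b j) (ha : ∀ j, v ∣ a j) (hb : ∀ j, v ∣ b j) :
    ∀ s : Multiset ι, u * v ^ (Multiset.card s - 1) ∣ (s.map a).prod - (s.map b).prod := by
  intro s
  induction s using Multiset.induction with
  | empty => simp
  | cons j t ih =>
    rw [Multiset.map_cons, Multiset.map_cons, Multiset.prod_cons, Multiset.prod_cons,
      Multiset.card_cons]
    have key : a j * (t.map a).prod - b j * (t.map b).prod
        = (a j - b j) * (t.map a).prod + b j * ((t.map a).prod - (t.map b).prod) := by ring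
    rw [key, Nat.add_sub_cancel]
    apply dvd_add
    · have h1 : v ^ Multiset.card t ∣ (t.map a).prod := by
        have : ((t.map fun _ => v)).prod ∣ (t.map a).prod :=
          Multiset.prod_dvd_prod_of_dvd _ _ (fun x _ => ha x)
        simpa using this
      exact mul_dvd_mul (hd j) h1
    · rcases Nat.eq_zero_or_pos (Multiset.card t) with h0 | hpos
      · rw [Multiset.card_eq_zero] at h0
        subst h0
        simp
      · obtain ⟨k, hk⟩ : ∃ k, Multiset.card t = k + 1 := ⟨Multiset.card t - 1, (Nat.succ_pred_eq_of_pos hpos).symm⟩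
        have h2 : u * v ^ k ∣ (t.map a).prod - (t.map b).prod := by
          simpa [hk] using ih
        have : v * (u * v ^ k) ∣ b j * ((t.map a).prod - (t.map b).prod) :=
          mul_dvd_mul (hb j) h2
        refine dvd_trans (dvd_of_eq ?_) this
        rw [hk]; ring

lemma aux_monomial_dvd {R : Type*} [CommRing R] {n : ℕ} (p q : Fin n → Polynomial R)
    (d : ℕ) (hd : ∀ j, (X : Polynomial R) ^ d ∣ p j - q j)
    (hp : ∀ j, (X : Polynomial R) ∣ p j) (hq : ∀ j, (X : Polynomial R) ∣ q j)
    (m : Fin n →₀ ℕ) (hm : 2 ≤ m.sum fun _ k => k) :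
    (X : Polynomial R) ^ (d + 1) ∣
      (m.prod fun j k => p j ^ k) - (m.prod fun j k => q j ^ k) := by
  have hrw : ∀ r : Fin n → Polynomial R,
      (m.prod fun j k => r j ^ k) = ((m.toMultiset.map r)).prod := by
    intro r
    rw [Finsupp.toMultiset_map, Finsupp.prod_toMultiset,
      Finsupp.prod_mapDomain_index (fun a => pow_zero a) (fun a k1 k2 => pow_add a k1 k2)]
  rw [hrw p, hrw q]
  have hcard : Multiset.card m.toMultiset = m.sum fun _ k => k := by
    simp [Finsupp.card_toMultiset, Function.id_def]
  have h1 := aux_multiset_dvd p q (X ^ d) X hd hp hq m.toMultiset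
  refine dvd_trans ?_ h1
  rw [← pow_add]
  have h2 : 2 ≤ Multiset.card m.toMultiset := hcard ▸ hm
  exact pow_dvd_pow X (by omega)

lemma aux_aeval_dvd {R : Type*} [CommRing R] {n : ℕ} (p q : Fin n → Polynomial R)
    (d : ℕ) (hd : ∀ j, (X : Polynomial R) ^ d ∣ p j - q j)
    (hp : ∀ j, (X : Polynomial R) ∣ p j) (hq : ∀ j, (X : Polynomial R) ∣ q j)
    (P : MvPolynomial (Fin n) R) (hP : ∀ m ∈ P.support, 2 ≤ m.sum fun _ k => k) :
    (X : Polynomial R) ^ (d + 1) ∣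
      (MvPolynomial.aeval p P : Polynomial R) - MvPolynomial.aeval q P := by
  rw [MvPolynomial.as_sum P, map_sum, map_sum, ← Finset.sum_sub_distrib]
  apply Finset.dvd_sum
  intro m hm
  rw [MvPolynomial.aeval_monomial, MvPolynomial.aeval_monomial, ← mul_sub]
  exact Dvd.dvd.mul_left (aux_monomial_dvd p q d hd hp hq m (hP m hm)) _

/-- Proposition 4.2 of the paper, truncation form. Let `F = I − H` with
`H` of affine part zero, `f`, `g` curves with `f(0) = g(0) = 0` and `F(g) = f`. Define
`K_1 = 0` and `K_{d+1}` as the truncation of `H(f + K_d)` modulo `t^{d+1}`. Then `K_d` is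
the truncation of `g − f` modulo `t^d` for all `d ≥ 1`; in particular the sequence is
eventually equal to `g − f`. -/
theorem iterative_preimage_truncation
    (R : Type*) [CommRing R] (n : ℕ)
    (H : Fin n → MvPolynomial (Fin n) R)
    (hH : ∀ i, ∀ m ∈ (H i).support, 2 ≤ m.sum fun _ k => k)
    (f g : Fin n → Polynomial R)
    (hf0 : ∀ i, (f i).coeff 0 = 0) (hg0 : ∀ i, (g i).coeff 0 = 0)
    (hFg : ∀ i, MvPolynomial.aeval g (MvPolynomial.X i - H i) = f i)
    (K : ℕ → Fin n → Polynomial R)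
    (hK1 : K 1 = 0)
    (hKrec : ∀ d ≥ 1, ∀ i, K (d + 1) i =
      PowerSeries.trunc (d + 1)
        ((MvPolynomial.aeval (fun j => f j + K d j) (H i) : Polynomial R) : PowerSeries R)) :
    (∀ d ≥ 1, ∀ i, K d i = PowerSeries.trunc d ((g i - f i : Polynomial R) : PowerSeries R)) ∧
    ∃ D : ℕ, ∀ d ≥ D, K d = fun i => g i - f i := by
  have hgf : ∀ i, (MvPolynomial.aeval g (H i) : Polynomial R) = g i - f i := by
    intro i
    have h := hFg i
    rw [map_sub, MvPolynomial.aeval_X] at h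
    linear_combination -h
  have T : ∀ d ≥ 1, ∀ i, K d i
      = PowerSeries.trunc d ((g i - f i : Polynomial R) : PowerSeries R) := by
    intro d hd
    induction d, hd using Nat.le_induction with
    | base =>
      intro i
      rw [hK1]
      ext k
      simp only [Pi.zero_apply, Polynomial.coeff_zero, PowerSeries.coeff_trunc,
        Polynomial.coeff_coe]
      split
      · next hk =>
        interval_cases k
        rw [Polynomial.coeff_sub, hf0 i, hg0 i, sub_zero]
      · rfl
    | succ d hd ih =>
      intro i
      rw [hKrec d hd i]
      have hK0 : ∀ j k, k < d → (K d j).coeff k = (g j - f j).coeff k := by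
        intro j k hk
        rw [ih j, PowerSeries.coeff_trunc, if_pos hk, Polynomial.coeff_coe]
      set p : Fin n → Polynomial R := fun j => f j + K d j with hp_def
      have hp : ∀ j, (X : Polynomial R) ∣ p j := by
        intro j
        rw [Polynomial.X_dvd_iff, Polynomial.coeff_add, hf0 j,
          hK0 j 0 hd, Polynomial.coeff_sub, hf0 j, hg0 j]
        ring
      have hq : ∀ j, (X : Polynomial R) ∣ g j := fun j => Polynomial.X_dvd_iff.mpr (hg0 j)
      have hdvd : ∀ j, (X : Polynomial R) ^ d ∣ p j - g j := by
        intro j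
        rw [Polynomial.X_pow_dvd_iff]
        intro k hk
        rw [Polynomial.coeff_sub, Polynomial.coeff_add, hK0 j k hk, Polynomial.coeff_sub]
        ring
      have key := aux_aeval_dvd p g d hdvd hp hq (H i) (hH i)
      rw [Polynomial.X_pow_dvd_iff] at key
      ext k
      rw [PowerSeries.coeff_trunc, PowerSeries.coeff_trunc, Polynomial.coeff_coe,
        Polynomial.coeff_coe]
      split
      · next hk =>
        have := key k hk
        rw [Polynomial.coeff_sub, sub_eq_zero] at this
        rw [this, hgf i]
      · rfl
  refine ⟨T, (Finset.univ.sup fun i => (g i - f i).natDegree) + 1, ?_⟩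
  intro d hd
  funext i
  have h1 : 1 ≤ d := le_trans (Nat.le_add_left 1 _) hd
  rw [T d h1 i, PowerSeries.trunc_coe_eq_self]
  have : (g i - f i).natDegree ≤ Finset.univ.sup fun i => (g i - f i).natDegree :=
    Finset.le_sup (f := fun i => (g i - f i).natDegree) (Finset.mem_univ i)
  omega
end
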